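/- arXiv:1903.08355 — 2 statements merged into one kernel-verified Lean document; each statement's English description precedes it below -/
import Mathlib

section
/- Let A be a connected graded Gorenstein algebra over a field k with RHom_A(k, A) ≅ k[−n] (Gorenstein parameter a = 0, injective dimension n = 2), where k = A/A₊. Let f: k[−1] → A[1] be any nonzero morphism in D^b(gr-A) and let C be its cocone, giving an exact triangle A → C → k[−1] → A[1]. Then Hom_{D^b(gr-A)}(C[i], A(r)) = 0 for all i ∈ ℤ and all r ≤ 0. -/
open CategoryTheory CategoryTheory.Pretriangulated

/-!
A map `g : C⟦i⟧ ⟶ A(r)` vanishes once its restriction to `A⟦i⟧` does and every map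
`k⟦-1⟧⟦i⟧ ⟶ A(r)` dies on `C⟦i⟧`; by the Gorenstein vanishing this is automatic unless
`(i, r)` is `(0, 0)` or `(-1, 0)`. For `(-1, 0)`, `Hom(k⟦-2⟧, A)` is the line spanned by the
nonzero map induced by `f`, which dies on `C⟦-1⟧`. For `(0, 0)`, `End A` is a line, so a nonzero
restriction `A ⟶ C ⟶ A` would be invertible, making `A ⟶ C` a split mono and forcing `f = 0`.
-/

namespace CategoryTheory

variable {C : Type*} [Category C] [Preadditive C]

section Linear

variable {F : Type*} [Field F] [Linear F C]

lemma isIso_of_ne_zero_of_finrank_end_eq_one {X : C} (hX : Module.finrank F (X ⟶ X) = 1)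
    {f : X ⟶ X} (hf : f ≠ 0) : IsIso f := by
  have hid : 𝟙 X ≠ 0 := fun h => by
    have : Subsingleton (X ⟶ X) := ⟨fun a b => by
      rw [← Category.comp_id a, ← Category.comp_id b, h, Limits.comp_zero, Limits.comp_zero]⟩
    simp [Module.finrank_zero_of_subsingleton] at hX
  obtain ⟨c, rfl⟩ := (finrank_eq_one_iff_of_nonzero' (𝟙 X) hid).mp hX f
  have hc : c ≠ 0 := by rintro rfl; exact hf (zero_smul F _)
  exact ⟨c⁻¹ • 𝟙 X, by simp [smul_smul, hc], by simp [smul_smul, hc]⟩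

end Linear

namespace Pretriangulated

variable [HasShift C ℤ] [∀ n : ℤ, (CategoryTheory.shiftFunctor C n).Additive]

lemma Triangle.shiftFunctor_obj_mor₃_ne_zero {T : Triangle C} (hT : T.mor₃ ≠ 0) (n : ℤ) :
    ((Triangle.shiftFunctor C n).obj T).mor₃ ≠ 0 := by
  change n.negOnePow • (T.mor₃⟦n⟧' ≫ (shiftFunctorComm C 1 n).hom.app T.obj₁) ≠ 0
  rwa [ne_eq, smul_eq_zero_iff_eq, Preadditive.IsIso.comp_right_eq_zero, Functor.map_eq_zero_iff]

variable [Limits.HasZeroObject C] [Pretriangulated C] {T : Triangle C} {W : C}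

namespace Triangle

lemma eq_zero_of_comp_mor₁_eq_zero (hT : T ∈ distTriang C) (g : T.obj₂ ⟶ W)
    (hg : T.mor₁ ≫ g = 0) (h₃ : ∀ h : T.obj₃ ⟶ W, T.mor₂ ≫ h = 0) : g = 0 := by
  obtain ⟨h, rfl⟩ := yoneda_exact₂ T hT g hg
  exact h₃ h

variable {F : Type*} [Field F] [Linear F C]

lemma comp_mor₂_eq_zero_of_finrank_eq_one (hT : T ∈ distTriang C) (e : T.obj₁⟦(1 : ℤ)⟧ ≅ W)
    (hW : Module.finrank F (T.obj₃ ⟶ W) = 1) (h₃ : T.mor₃ ≠ 0) (h : T.obj₃ ⟶ W) :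
    T.mor₂ ≫ h = 0 := by
  have : T.mor₃ ≫ e.hom ≠ 0 := by simpa using h₃
  obtain ⟨c, rfl⟩ := (finrank_eq_one_iff_of_nonzero' _ this).mp hW h
  rw [Linear.comp_smul, comp_distTriang_mor_zero₂₃_assoc _ hT, Limits.zero_comp, smul_zero]

lemma comp_mor₁_eq_zero_of_finrank_end_eq_one (hT : T ∈ distTriang C) (e : T.obj₁ ≅ W)
    (hW : Module.finrank F (W ⟶ W) = 1) (h₃ : T.mor₃ ≠ 0) (g : T.obj₂ ⟶ W) :
    T.mor₁ ≫ g = 0 := by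
  by_contra hg
  have : IsIso (e.inv ≫ T.mor₁ ≫ g) :=
    isIso_of_ne_zero_of_finrank_end_eq_one hW (by simpa using hg)
  have : IsIso (T.mor₁ ≫ g) := IsIso.of_isIso_comp_left e.inv _
  exact h₃ (mor₃_eq_zero_of_mono₁ T hT (mono_of_mono _ g))

end Triangle

end Pretriangulated

end CategoryTheory

/-- `AA`, `Kk` and `A_ r` stand for `A`, `k` and `A(r)`. -/
theorem cocone_hom_vanishing
    {T : Type*} [Category T] [Preadditive T] [Limits.HasZeroObject T] [HasShift T ℤ]
    [∀ n : ℤ, (CategoryTheory.shiftFunctor T n).Additive] [Pretriangulated T]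
    (F : Type*) [Field F] [Linear F T]
    (AA Cc Kk : T) (A_ : ℤ → T)
    (u : AA ⟶ Cc) (v : Cc ⟶ Kk⟦(-1 : ℤ)⟧) (w : Kk⟦(-1 : ℤ)⟧ ⟶ AA⟦(1 : ℤ)⟧)
    (htri : Triangle.mk u v w ∈ distTriang T)
    (hw : w ≠ 0)
    (hA0 : A_ 0 = AA)
    (hAvan : ∀ (i r : ℤ), r ≤ 0 → ¬(i = 0 ∧ r = 0) → ∀ g : AA⟦i⟧ ⟶ A_ r, g = 0)
    (hKvan : ∀ (i r : ℤ), r ≤ 0 → ¬(i = -2 ∧ r = 0) → ∀ g : Kk⟦i⟧ ⟶ A_ r, g = 0)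
    (h1 : Module.finrank F (AA ⟶ AA) = 1)
    (h2 : Module.finrank F (Kk⟦(-2 : ℤ)⟧ ⟶ AA) = 1) :
    ∀ (i r : ℤ), r ≤ 0 → ∀ g : Cc⟦i⟧ ⟶ A_ r, g = 0 := by
  intro i r hr g
  set S := (Triangle.shiftFunctor T i).obj (Triangle.mk u v w)
  have hS : S ∈ distTriang T := Triangle.shift_distinguished _ htri i
  have hS₃ : S.mor₃ ≠ 0 := Triangle.shiftFunctor_obj_mor₃_ne_zero hw i
  refine Triangle.eq_zero_of_comp_mor₁_eq_zero hS g ?_ fun h => ?_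
  · by_cases hir : i = 0 ∧ r = 0
    · obtain ⟨rfl, rfl⟩ := hir
      exact Triangle.comp_mor₁_eq_zero_of_finrank_end_eq_one hS
        ((shiftFunctorZero T ℤ).app AA ≪≫ eqToIso hA0.symm) (by rwa [hA0]) hS₃ g
    · exact hAvan i r hr hir _
  · by_cases hir : i = -1 ∧ r = 0
    · obtain ⟨rfl, rfl⟩ := hir
      have e := (shiftFunctorAdd' T (-1) (-1) (-2) (by norm_num)).app Kk
      exact Triangle.comp_mor₂_eq_zero_of_finrank_eq_one hS
        ((shiftFunctorCompIsoId T (-1) 1 (by norm_num)).app AA ≪≫ eqToIso hA0.symm)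
        ((Linear.homCongr F e (eqToIso hA0.symm)).finrank_eq.symm.trans h2) hS₃ h
    · have e := (shiftFunctorAdd' T (-1) i (-1 + i) rfl).app Kk
      have he : e.hom ≫ h = 0 := hKvan (-1 + i) r hr (by omega) _
      obtain rfl : h = 0 := (Preadditive.IsIso.comp_left_eq_zero e.hom h).1 he
      exact Limits.comp_zero
end

section
/- Let R be a commutative domain and W ∈ R nonzero. Suppose f: F → G and g: G → F are R-linear maps between finitely generated free R-modules of the same rank with g ∘ f = W·id_F. Then f ∘ g = W·id_G. -/
/-!
Choose bases and pass to square matrices `A` of `f` and `B` of `g`, so that `B * A = W • 1`.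
Taking determinants, `det B * det A = W ^ n` is a non-zero-divisor, hence so is `det A`, and
a matrix `M` with `M * A = 0` vanishes row by row. Apply this to `M = A * B - W • 1`, for
which `M * A = A * (B * A) - W • A = 0`.
-/

open scoped nonZeroDivisors

namespace Matrix

variable {l n R : Type*} [Fintype n] [DecidableEq n] [CommRing R]

theorem eq_zero_of_mul_eq_zero_of_det_mem_nonZeroDivisors {M : Matrix l n R}
    {A : Matrix n n R} (hA : A.det ∈ R⁰) (h : M * A = 0) : M = 0 := by
  funext i
  exact eq_zero_of_det_mem_nonZeroDivisors_of_vecMul_eq_zero hA (congrFun h i)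

theorem det_mem_nonZeroDivisors_of_mul_eq_smul_one {W : R} (hW : W ∈ R⁰) {A B : Matrix n n R}
    (h : B * A = W • 1) : A.det ∈ R⁰ := by
  have hdet : B.det * A.det = W ^ Fintype.card n := by
    rw [← det_mul, h, det_smul, det_one, mul_one]
  exact (mul_mem_nonZeroDivisors.mp (hdet ▸ pow_mem hW _)).2

theorem mul_eq_smul_one_comm_of_mem_nonZeroDivisors {W : R} (hW : W ∈ R⁰)
    {A B : Matrix n n R} (h : B * A = W • 1) : A * B = W • 1 := by
  have hA := det_mem_nonZeroDivisors_of_mul_eq_smul_one hW h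
  refine sub_eq_zero.mp <| eq_zero_of_mul_eq_zero_of_det_mem_nonZeroDivisors hA ?_
  rw [sub_mul, Matrix.mul_assoc, h, Matrix.mul_smul, Matrix.mul_one, smul_mul, Matrix.one_mul,
    sub_self]

end Matrix

/-- Let `R` be a commutative domain and `W ∈ R` nonzero.  If
`f : F → G` and `g : G → F` are `R`-linear maps between finitely generated free
`R`-modules of the same rank with `g ∘ f = W·id_F`, then `f ∘ g = W·id_G`. -/
theorem other_composite_eq_smul_id
    {R F G : Type*} [CommRing R] [IsDomain R]
    [AddCommGroup F] [Module R F] [Module.Free R F] [Module.Finite R F]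
    [AddCommGroup G] [Module R G] [Module.Free R G] [Module.Finite R G]
    (W : R) (hW : W ≠ 0)
    (hrank : Module.finrank R F = Module.finrank R G)
    (f : F →ₗ[R] G) (g : G →ₗ[R] F)
    (hgf : g ∘ₗ f = W • LinearMap.id) :
    f ∘ₗ g = W • LinearMap.id := by
  let bF := (Module.finBasis R F).reindex (finCongr hrank)
  let bG := Module.finBasis R G
  have hBA : LinearMap.toMatrix bG bF g * LinearMap.toMatrix bF bG f = W • 1 := by
    rw [← LinearMap.toMatrix_comp, hgf, map_smul, LinearMap.toMatrix_id]
  apply (LinearMap.toMatrix bG bG).injective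
  rw [LinearMap.toMatrix_comp bG bF bG, map_smul, LinearMap.toMatrix_id]
  exact Matrix.mul_eq_smul_one_comm_of_mem_nonZeroDivisors (mem_nonZeroDivisors_of_ne_zero hW) hBA
end
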